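/- For all natural numbers m, i, j with 2i ≤ m and j ≤ m−2i, the following identity of rising factorials holds: (−m+2i)_j · (m−2i+1)_j = (−m)_j · (m+1)_j · ( (m−j)^{\underline{2i}} / (m+j)^{\underline{2i}} ), where (a)_j = a(a+1)⋯(a+j−1) is the rising factorial with (a)_0 = 1, and x^{\underline{m}} = x(x−1)⋯(x−m+1) is the falling factorial with x^{\underline{0}} = 1 (all quantities interpreted as rational numbers; the denominator (m+j)^{\underline{2i}} is nonzero since j ≤ m−2i implies every factor is at least 1). -/

import Mathlib

/-!
For every rational `x`, `(-x)_j (x+1)_j = (-1)^j (x+j)^{\underline{2j}}`, so both sides reduce to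
falling factorials of length `2j`: at `m-2i+j` on the left, at `m+j` on the right. Splitting
`(m+j)^{\underline{2i+2j}}` in the two possible orders gives
`(m+j)^{\underline{2j}} (m-j)^{\underline{2i}} = (m+j)^{\underline{2i}} (m-2i+j)^{\underline{2j}}`,
and `(m+j)^{\underline{2i}} ≠ 0` because `2i ≤ m`.
-/

/-- Rising factorial (Pochhammer symbol) of a rational number: `(a)_j = a (a+1) ⋯ (a+j-1)`. -/
def risingFactorial (a : ℚ) (j : ℕ) : ℚ := ∏ i ∈ Finset.range j, (a + i)

/-- Falling factorial of a rational number: `x^{(m)} = x (x-1) ⋯ (x-m+1)`. -/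
def fallingFactorial (x : ℚ) (m : ℕ) : ℚ := ∏ i ∈ Finset.range m, (x - i)

lemma risingFactorial_neg (a : ℚ) (j : ℕ) :
    risingFactorial (-a) j = (-1) ^ j * fallingFactorial a j := by
  calc risingFactorial (-a) j = ∏ t ∈ Finset.range j, (-1) * (a - t) :=
        Finset.prod_congr rfl fun _ _ => by ring
    _ = (-1) ^ j * fallingFactorial a j := by
      rw [Finset.prod_mul_distrib, Finset.prod_const, Finset.card_range, fallingFactorial]

lemma risingFactorial_add_one (a : ℚ) (j : ℕ) :
    risingFactorial (a + 1) j = fallingFactorial (a + j) j := by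
  rw [risingFactorial, fallingFactorial, ← Finset.prod_range_reflect]
  refine Finset.prod_congr rfl fun t ht => ?_
  rw [Nat.sub_sub, add_comm 1, Nat.cast_sub (Finset.mem_range.mp ht)]
  push_cast
  ring

lemma fallingFactorial_add (x : ℚ) (a b : ℕ) :
    fallingFactorial x (a + b) = fallingFactorial x a * fallingFactorial (x - a) b := by
  rw [fallingFactorial, fallingFactorial, fallingFactorial, Finset.prod_range_add]
  congr 1
  exact Finset.prod_congr rfl fun _ _ => by push_cast; ring

lemma fallingFactorial_mul_fallingFactorial_comm (x : ℚ) (a b : ℕ) :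
    fallingFactorial x a * fallingFactorial (x - a) b =
      fallingFactorial x b * fallingFactorial (x - b) a := by
  rw [← fallingFactorial_add, ← fallingFactorial_add, add_comm]

lemma fallingFactorial_natCast_ne_zero {n k : ℕ} (h : k ≤ n) : fallingFactorial n k ≠ 0 :=
  Finset.prod_ne_zero_iff.mpr fun t ht => by
    have : (t : ℚ) < n := by exact_mod_cast (Finset.mem_range.mp ht).trans_le h
    linarith

lemma risingFactorial_neg_mul_risingFactorial_add_one (x : ℚ) (j : ℕ) :
    risingFactorial (-x) j * risingFactorial (x + 1) j =
      (-1) ^ j * fallingFactorial (x + j) (2 * j) := by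
  rw [risingFactorial_neg, risingFactorial_add_one, two_mul, fallingFactorial_add,
    add_sub_cancel_right]
  ring

theorem risingFactorial_shift_identity_general (m i j : ℕ) (hi : 2 * i ≤ m) :
    risingFactorial (-(m : ℚ) + 2 * i) j * risingFactorial ((m : ℚ) - 2 * i + 1) j =
      risingFactorial (-(m : ℚ)) j * risingFactorial ((m : ℚ) + 1) j *
        (fallingFactorial ((m : ℚ) - j) (2 * i) / fallingFactorial ((m : ℚ) + j) (2 * i)) := by
  have hne : fallingFactorial ((m : ℚ) + j) (2 * i) ≠ 0 := by
    exact_mod_cast fallingFactorial_natCast_ne_zero (n := m + j) (by omega)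
  have hcomm := fallingFactorial_mul_fallingFactorial_comm ((m : ℚ) + j) (2 * j) (2 * i)
  push_cast at hcomm
  rw [show (m : ℚ) + j - 2 * j = m - j by ring, show (m : ℚ) + j - 2 * i = m - 2 * i + j by ring]
    at hcomm
  rw [neg_add_eq_sub, ← neg_sub, risingFactorial_neg_mul_risingFactorial_add_one,
    risingFactorial_neg_mul_risingFactorial_add_one, mul_assoc, mul_div_assoc', hcomm,
    mul_div_cancel_left₀ _ hne]

theorem risingFactorial_shift_identity (m i j : ℕ) (hi : 2 * i ≤ m) (hj : j ≤ m - 2 * i) :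
    risingFactorial (-(m : ℚ) + 2 * i) j * risingFactorial ((m : ℚ) - 2 * i + 1) j =
      risingFactorial (-(m : ℚ)) j * risingFactorial ((m : ℚ) + 1) j *
        (fallingFactorial ((m : ℚ) - j) (2 * i) / fallingFactorial ((m : ℚ) + j) (2 * i)) :=
  risingFactorial_shift_identity_general m i j hi
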